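/- arXiv:2602.11817 — 2 statements merged into one kernel-verified Lean document; each statement's English description precedes it below -/
import Mathlib

section
/- For every t₀ ∈ ℝ and every triple of initial data v₀, v₁, v₂ ∈ H, there exists a unique three times continuously differentiable function w : [t₀, +∞) → H such that w(t₀) = v₀, w′(t₀) = v₁, w″(t₀) = v₂, and w‴(t) + a₂w″(t) + a₁w′(t) + a₀Ψ(w(t)) = 0 for all t ≥ t₀. -/
/-!
Adding the variational inequalities at `P u` and `P v` cancels the `γ h` terms and leaves
`‖P u - P v‖² ≤ ⟪u - v, P u - P v⟫`, so `P` is nonexpansive and `Ψ` is Lipschitz. Hence the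
equation, written as a first-order system for `(w, w', w'')`, has a globally Lipschitz right-hand
side. Picard–Lindelöf gives solutions on intervals whose length depends only on the Lipschitz
constant; gluing them gives a solution on `[t₀, ∞)`, and Grönwall uniqueness makes the pieces
coherent and the solution unique.
-/

open scoped RealInnerProductSpace NNReal
open Set

section Projection

variable {H : Type*} [NormedAddCommGroup H] [InnerProductSpace ℝ H]

theorem lipschitzWith_one_of_variationalInequality {Ω : Set H} {γ : ℝ} {h : H → ℝ} {P : H → H}
    (hP : ∀ u : H, P u ∈ Ω ∧ ∀ v ∈ Ω, ⟪P u - u, v - P u⟫ + γ * h v - γ * h (P u) ≥ 0) :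
    LipschitzWith 1 P := by
  refine lipschitzWith_iff_norm_sub_le.2 fun u v => ?_
  have hu := (hP u).2 (P v) (hP v).1
  have hv := (hP v).2 (P u) (hP u).1
  have hmono : ‖P u - P v‖ * ‖P u - P v‖ ≤ ⟪u - v, P u - P v⟫ := by
    have hsum : ⟪u - v, P u - P v⟫ - ⟪P u - P v, P u - P v⟫
        = ⟪P u - u, P v - P u⟫ + ⟪P v - v, P u - P v⟫ := by
      rw [← inner_sub_left, show P v - P u = -(P u - P v) by abel, inner_neg_right,
        ← sub_eq_neg_add, ← inner_sub_left]
      congr 1; abel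
    rw [← real_inner_self_eq_norm_mul_norm]
    linarith
  have hcs := real_inner_le_norm (u - v) (P u - P v)
  rw [NNReal.coe_one, one_mul]
  nlinarith [norm_nonneg (P u - P v), norm_nonneg (u - v)]

end Projection

section Trajectory

variable {E : Type*} [NormedAddCommGroup E] [NormedSpace ℝ E] {f : E → E} {K : ℝ≥0}
  {X Y : ℝ → E} {s u : Set ℝ}

def IsTrajectoryOn (f : E → E) (X : ℝ → E) (s : Set ℝ) : Prop :=
  ∀ t ∈ s, HasDerivWithinAt X (f (X t)) s t

theorem IsTrajectoryOn.mono (hX : IsTrajectoryOn f X s) (hus : u ⊆ s) : IsTrajectoryOn f X u :=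
  fun t ht => (hX t (hus ht)).mono hus

theorem IsTrajectoryOn.congr (hX : IsTrajectoryOn f X s) (hXY : EqOn Y X s) :
    IsTrajectoryOn f Y s := fun t ht => by
  rw [hXY ht]
  exact (hX t ht).congr hXY (hXY ht)

theorem IsTrajectoryOn.Icc_union {a b c : ℝ} (hab : a ≤ b) (hbc : b ≤ c)
    (h₁ : IsTrajectoryOn f X (Icc a b)) (h₂ : IsTrajectoryOn f X (Icc b c)) :
    IsTrajectoryOn f X (Icc a c) := fun t _ => by
  have hderiv : ∀ {p q : ℝ}, IsTrajectoryOn f X (Icc p q) →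
      HasDerivWithinAt X (f (X t)) (Icc p q) t := fun {p q} hX => by
    by_cases ht : t ∈ Icc p q
    · exact hX t ht
    · exact HasFDerivWithinAt.of_notMem_closure (by rwa [closure_Icc])
  simpa only [Icc_union_Icc_eq_Icc hab hbc] using (hderiv h₁).union (hderiv h₂)

theorem IsTrajectoryOn.eqOn_Icc (hf : LipschitzWith K f) {a b : ℝ}
    (hX : IsTrajectoryOn f X (Icc a b)) (hY : IsTrajectoryOn f Y (Icc a b)) (ha : X a = Y a) :
    EqOn X Y (Icc a b) := by
  have toIci : ∀ {Z : ℝ → E}, IsTrajectoryOn f Z (Icc a b) →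
      ∀ t ∈ Ico a b, HasDerivWithinAt Z (f (Z t)) (Ici t) t := fun hZ t ht =>
    (hZ t (Ico_subset_Icc_self ht)).mono_of_mem_nhdsWithin <|
      Filter.mem_of_superset (Icc_mem_nhdsGE ht.2) (Icc_subset_Icc_left ht.1)
  exact ODE_solution_unique (v := fun _ => f) (fun _ => hf)
    (fun t ht => (hX t ht).continuousWithinAt) (toIci hX)
    (fun t ht => (hY t ht).continuousWithinAt) (toIci hY) ha

theorem IsTrajectoryOn.eqOn_Ici (hf : LipschitzWith K f) {t₀ : ℝ}
    (hX : IsTrajectoryOn f X (Ici t₀)) (hY : IsTrajectoryOn f Y (Ici t₀)) (h₀ : X t₀ = Y t₀) :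
    EqOn X Y (Ici t₀) := fun _ ht =>
  (hX.mono Icc_subset_Ici_self).eqOn_Icc hf (hY.mono Icc_subset_Ici_self) h₀
    (right_mem_Icc.2 ht)

variable [CompleteSpace E]

theorem LipschitzWith.exists_isTrajectoryOn_Icc_add (hf : LipschitzWith K f) {δ : ℝ}
    (hδ : 0 ≤ δ) (hKδ : 2 * K * δ ≤ 1) (τ : ℝ) (x : E) :
    ∃ X : ℝ → E, X τ = x ∧ IsTrajectoryOn f X (Icc τ (τ + δ)) := by
  -- on the ball of radius `a = 2 δ ‖f x‖` the speed is at most `‖f x‖ + K a`, and this keeps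
  -- the Picard iterates in the ball for time `δ` since `2 K δ ≤ 1`
  obtain ⟨a, ha⟩ : ∃ a : ℝ≥0, (a : ℝ) = 2 * δ * ‖f x‖ := ⟨⟨_, by positivity⟩, rfl⟩
  have hbound : ∀ y ∈ Metric.closedBall x a, ‖f y‖ ≤ (‖f x‖₊ + K * a : ℝ≥0) := fun y hy => by
    have hlip := lipschitzWith_iff_norm_sub_le.1 hf y x
    have hya := mul_le_mul_of_nonneg_left (mem_closedBall_iff_norm.1 hy) K.2
    exact (norm_le_norm_add_norm_sub' (f y) (f x)).trans (add_le_add_right (hlip.trans hya) _)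
  have hpl := IsPicardLindelof.of_time_independent (tmin := τ) (tmax := τ + δ)
    (t₀ := ⟨τ, le_rfl, by linarith⟩) (r := 0) hbound hf.lipschitzOnWith (by
      simp only [NNReal.coe_add, NNReal.coe_mul, coe_nnnorm, ha, NNReal.coe_zero,
        sub_zero, add_sub_cancel_left, sub_self, max_eq_left hδ]
      nlinarith [norm_nonneg (f x), mul_nonneg hδ (norm_nonneg (f x))])
  exact hpl.exists_eq_forall_mem_Icc_hasDerivWithinAt₀

theorem LipschitzWith.exists_isTrajectoryOn_Icc (hf : LipschitzWith K f) (t₀ T : ℝ) (x₀ : E) :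
    ∃ X : ℝ → E, X t₀ = x₀ ∧ IsTrajectoryOn f X (Icc t₀ T) := by
  set δ : ℝ := 1 / (2 * K + 1)
  have hδ : 0 < δ := by positivity
  have hKδ : 2 * K * δ ≤ 1 := by
    rw [mul_one_div, div_le_one (by positivity)]
    linarith
  have hsteps : ∀ n : ℕ, ∃ X : ℝ → E, X t₀ = x₀ ∧ IsTrajectoryOn f X (Icc t₀ (t₀ + n * δ)) := by
    intro n
    induction n with
    | zero =>
      obtain ⟨X, hX₀, hX⟩ := hf.exists_isTrajectoryOn_Icc_add hδ.le hKδ t₀ x₀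
      exact ⟨X, hX₀, hX.mono (Icc_subset_Icc_right (by simp [hδ.le]))⟩
    | succ n ih =>
      obtain ⟨X₁, hX₁₀, hX₁⟩ := ih
      set b := t₀ + n * δ
      obtain ⟨X₂, hX₂b, hX₂⟩ := hf.exists_isTrajectoryOn_Icc_add hδ.le hKδ b (X₁ b)
      have hY₁ : EqOn (fun t => if t ≤ b then X₁ t else X₂ t) X₁ (Icc t₀ b) :=
        fun t ht => if_pos ht.2
      have hY₂ : EqOn (fun t => if t ≤ b then X₁ t else X₂ t) X₂ (Icc b (b + δ)) := fun t ht => by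
        rcases ht.1.eq_or_lt with rfl | hbt
        · simp [hX₂b]
        · exact if_neg hbt.not_ge
      have htb : t₀ ≤ b := le_add_of_nonneg_right (by positivity)
      refine ⟨fun t => if t ≤ b then X₁ t else X₂ t, (hY₁ (left_mem_Icc.2 htb)).trans hX₁₀, ?_⟩
      rw [show t₀ + ↑(n + 1) * δ = b + δ by push_cast; ring]
      exact (hX₁.congr hY₁).Icc_union htb (by linarith) (hX₂.congr hY₂)
  obtain ⟨n, hn⟩ := exists_nat_ge ((T - t₀) / δ)
  obtain ⟨X, hX₀, hX⟩ := hsteps n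
  refine ⟨X, hX₀, hX.mono (Icc_subset_Icc_right ?_)⟩
  rw [div_le_iff₀ hδ] at hn
  linarith

theorem LipschitzWith.exists_isTrajectoryOn_Ici (hf : LipschitzWith K f) (t₀ : ℝ) (x₀ : E) :
    ∃ X : ℝ → E, X t₀ = x₀ ∧ IsTrajectoryOn f X (Ici t₀) := by
  choose X hX₀ hX using fun T => hf.exists_isTrajectoryOn_Icc t₀ T x₀
  have hcoh : ∀ T T' u, u ∈ Icc t₀ T → u ∈ Icc t₀ T' → X T u = X T' u := fun T T' u hu hu' =>
    ((hX T).mono (Icc_subset_Icc_right (min_le_left T T'))).eqOn_Icc hf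
      ((hX T').mono (Icc_subset_Icc_right (min_le_right T T'))) ((hX₀ T).trans (hX₀ T').symm)
      ⟨hu.1, le_min hu.2 hu'.2⟩
  refine ⟨fun t => X (t + 1) t, hX₀ _, fun t ht => ?_⟩
  have hagree : EqOn (fun t => X (t + 1) t) (X (t + 1)) (Icc t₀ (t + 1)) := fun u hu =>
    hcoh _ _ u ⟨hu.1, by linarith⟩ hu
  have hmem : Icc t₀ (t + 1) ∈ nhdsWithin t (Ici t₀) := by
    rw [← Ici_inter_Iic]
    exact inter_mem_nhdsWithin _ (Iic_mem_nhds (by linarith))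
  have := ((hX (t + 1)).congr hagree) t ⟨ht, by linarith⟩
  exact this.mono_of_mem_nhdsWithin hmem

end Trajectory

section Calculus

variable {𝕜 : Type*} [NontriviallyNormedField 𝕜] {E F : Type*} [NormedAddCommGroup E]
  [NormedSpace 𝕜 E] [NormedAddCommGroup F] [NormedSpace 𝕜 F] {s : Set 𝕜} {x : 𝕜}

theorem HasDerivWithinAt.fst {f : 𝕜 → E × F} {f' : E × F} (h : HasDerivWithinAt f f' s x) :
    HasDerivWithinAt (fun t => (f t).1) f'.1 s x :=
  (ContinuousLinearMap.fst 𝕜 E F).hasFDerivAt.comp_hasDerivWithinAt x h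

theorem HasDerivWithinAt.snd {f : 𝕜 → E × F} {f' : E × F} (h : HasDerivWithinAt f f' s x) :
    HasDerivWithinAt (fun t => (f t).2) f'.2 s x :=
  (ContinuousLinearMap.snd 𝕜 E F).hasFDerivAt.comp_hasDerivWithinAt x h

theorem contDiffOn_succ_of_hasDerivWithinAt (hs : UniqueDiffOn 𝕜 s) {n : ℕ} {u u' : 𝕜 → E}
    (hu : ∀ t ∈ s, HasDerivWithinAt u (u' t) s t) (hu' : ContDiffOn 𝕜 n u' s) :
    ContDiffOn 𝕜 (n + 1) u s :=
  (contDiffOn_succ_iff_derivWithin hs).2 ⟨fun t ht => (hu t ht).differentiableWithinAt,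
    by simp, hu'.congr fun t ht => (hu t ht).derivWithin (hs t ht)⟩

end Calculus

section Companion

variable {H : Type*} [NormedAddCommGroup H] [NormedSpace ℝ H] {a₀ a₁ a₂ : ℝ} {Ψ : H → H}
  {s : Set ℝ}

/-- `X = (w, w', w'')` solves `X' = companionField a₀ a₁ a₂ Ψ X` exactly when
`w''' + a₂ w'' + a₁ w' + a₀ Ψ w = 0`. -/
def companionField (a₀ a₁ a₂ : ℝ) (Ψ : H → H) (p : H × H × H) : H × H × H :=
  (p.2.1, p.2.2, -(a₂ • p.2.2 + a₁ • p.2.1 + a₀ • Ψ p.1))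

theorem LipschitzWith.companionField {K : ℝ≥0} (hΨ : LipschitzWith K Ψ) (a₀ a₁ a₂ : ℝ) :
    ∃ L, LipschitzWith L (companionField a₀ a₁ a₂ Ψ) := by
  have hw : LipschitzWith 1 fun p : H × H × H => p.1 := LipschitzWith.prod_fst
  have hy : LipschitzWith (1 * 1) fun p : H × H × H => p.2.1 :=
    LipschitzWith.prod_fst.comp LipschitzWith.prod_snd
  have hz : LipschitzWith (1 * 1) fun p : H × H × H => p.2.2 :=
    LipschitzWith.prod_snd.comp LipschitzWith.prod_snd
  exact ⟨_, hy.prodMk (hz.prodMk ((((lipschitzWith_smul a₂).comp hz).add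
    ((lipschitzWith_smul a₁).comp hy)).add ((lipschitzWith_smul a₀).comp (hΨ.comp hw))).neg)⟩

theorem isTrajectoryOn_companionField_jet (hs : UniqueDiffOn ℝ s) {w : ℝ → H}
    (hw : ContDiffOn ℝ 3 w s)
    (hode : ∀ t ∈ s, derivWithin (derivWithin (derivWithin w s) s) s t
      + a₂ • derivWithin (derivWithin w s) s t + a₁ • derivWithin w s t + a₀ • Ψ (w t) = 0) :
    IsTrajectoryOn (companionField a₀ a₁ a₂ Ψ)
      (fun t => (w t, derivWithin w s t, derivWithin (derivWithin w s) s t)) s := fun t ht => by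
  have hw₁ := hw.derivWithin hs (m := 2) (by norm_num)
  have hw₂ := hw₁.derivWithin hs (m := 1) (by norm_num)
  have hw₃ : derivWithin (derivWithin (derivWithin w s) s) s t = -(a₂ • derivWithin
      (derivWithin w s) s t + a₁ • derivWithin w s t + a₀ • Ψ (w t)) :=
    eq_neg_of_add_eq_zero_left (by rw [← hode t ht]; abel)
  have := ((hw.differentiableOn (by norm_num)) t ht).hasDerivWithinAt.prodMk
    (((hw₁.differentiableOn (by norm_num)) t ht).hasDerivWithinAt.prodMk
      ((hw₂.differentiableOn (by norm_num)) t ht).hasDerivWithinAt)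
  rwa [hw₃] at this

theorem IsTrajectoryOn.solves_of_companionField (hs : UniqueDiffOn ℝ s) (hΨ : Continuous Ψ)
    {w y z : ℝ → H} (hX : IsTrajectoryOn (companionField a₀ a₁ a₂ Ψ) (fun t => (w t, y t, z t)) s) :
    ContDiffOn ℝ 3 w s ∧ EqOn (derivWithin w s) y s ∧
      EqOn (derivWithin (derivWithin w s) s) z s ∧
      ∀ t ∈ s, derivWithin (derivWithin (derivWithin w s) s) s t
        + a₂ • derivWithin (derivWithin w s) s t + a₁ • derivWithin w s t + a₀ • Ψ (w t) = 0 := by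
  have hw : ∀ t ∈ s, HasDerivWithinAt w (y t) s t := fun t ht => (hX t ht).fst
  have hy : ∀ t ∈ s, HasDerivWithinAt y (z t) s t := fun t ht => (hX t ht).snd.fst
  have hz : ∀ t ∈ s, HasDerivWithinAt z (-(a₂ • z t + a₁ • y t + a₀ • Ψ (w t))) s t :=
    fun t ht => (hX t ht).snd.snd
  have hDw : EqOn (derivWithin w s) y s := fun t ht => (hw t ht).derivWithin (hs t ht)
  have hD₂w : EqOn (derivWithin (derivWithin w s) s) z s := fun t ht =>
    (derivWithin_congr hDw (hDw ht)).trans ((hy t ht).derivWithin (hs t ht))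
  have hD₃w : EqOn (derivWithin (derivWithin (derivWithin w s) s) s)
      (fun t => -(a₂ • z t + a₁ • y t + a₀ • Ψ (w t))) s := fun t ht =>
    (derivWithin_congr hD₂w (hD₂w ht)).trans ((hz t ht).derivWithin (hs t ht))
  have hcont : ∀ {u u' : ℝ → H}, (∀ t ∈ s, HasDerivWithinAt u (u' t) s t) → ContinuousOn u s :=
    fun hu t ht => (hu t ht).continuousWithinAt
  have hz' : ContinuousOn (fun t => -(a₂ • z t + a₁ • y t + a₀ • Ψ (w t))) s :=
    ((((hcont hz).const_smul a₂).add ((hcont hy).const_smul a₁)).add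
      ((hΨ.comp_continuousOn (hcont hw)).const_smul a₀)).neg
  refine ⟨?_, hDw, hD₂w, fun t ht => ?_⟩
  · have hz₁ := contDiffOn_succ_of_hasDerivWithinAt hs (n := 0) hz (contDiffOn_zero.2 hz')
    have hy₂ := contDiffOn_succ_of_hasDerivWithinAt hs (n := 1) hy hz₁
    exact contDiffOn_succ_of_hasDerivWithinAt hs (n := 2) hw hy₂
  · rw [hD₃w ht, hD₂w ht, hDw ht]
    module

end Companion

theorem stmt_5_general
    {H : Type*} [NormedAddCommGroup H] [InnerProductSpace ℝ H] [CompleteSpace H]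
    (Ω : Set H)
    (γ : ℝ)
    (h : H → ℝ)
    (P : H → H)
    (hP : ∀ u : H, P u ∈ Ω ∧ ∀ v ∈ Ω, ⟪P u - u, v - P u⟫ + γ * h v - γ * h (P u) ≥ 0)
    (F g : H → H) (η β : ℝ) (hη : 0 ≤ η) (hβ : 0 ≤ β)
    (hF : ∀ u v : H, ‖F u - F v‖ ≤ η * ‖u - v‖)
    (hg : ∀ u v : H, ‖g u - g v‖ ≤ β * ‖u - v‖)
    (Ψ : H → H) (hΨ : ∀ u : H, Ψ u = F u - P (F u - γ • g u))
    (a₀ a₁ a₂ : ℝ)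
    (t₀ : ℝ) (v₀ v₁ v₂ : H) :
    (∃ w : ℝ → H, (fun (w : ℝ → H) =>
      ContDiffOn ℝ 3 w (Set.Ici t₀) ∧
      w t₀ = v₀ ∧ derivWithin w (Set.Ici t₀) t₀ = v₁ ∧
      derivWithin (derivWithin w (Set.Ici t₀)) (Set.Ici t₀) t₀ = v₂ ∧
      ∀ t ∈ Set.Ici t₀,
        derivWithin (derivWithin (derivWithin w (Set.Ici t₀)) (Set.Ici t₀)) (Set.Ici t₀) t
          + a₂ • derivWithin (derivWithin w (Set.Ici t₀)) (Set.Ici t₀) t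
          + a₁ • derivWithin w (Set.Ici t₀) t + a₀ • Ψ (w t) = 0) w) ∧
    (∀ w w' : ℝ → H, (fun (w : ℝ → H) =>
      ContDiffOn ℝ 3 w (Set.Ici t₀) ∧
      w t₀ = v₀ ∧ derivWithin w (Set.Ici t₀) t₀ = v₁ ∧
      derivWithin (derivWithin w (Set.Ici t₀)) (Set.Ici t₀) t₀ = v₂ ∧
      ∀ t ∈ Set.Ici t₀,
        derivWithin (derivWithin (derivWithin w (Set.Ici t₀)) (Set.Ici t₀)) (Set.Ici t₀) t
          + a₂ • derivWithin (derivWithin w (Set.Ici t₀)) (Set.Ici t₀) t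
          + a₁ • derivWithin w (Set.Ici t₀) t + a₀ • Ψ (w t) = 0) w → (fun (w : ℝ → H) =>
      ContDiffOn ℝ 3 w (Set.Ici t₀) ∧
      w t₀ = v₀ ∧ derivWithin w (Set.Ici t₀) t₀ = v₁ ∧
      derivWithin (derivWithin w (Set.Ici t₀)) (Set.Ici t₀) t₀ = v₂ ∧
      ∀ t ∈ Set.Ici t₀,
        derivWithin (derivWithin (derivWithin w (Set.Ici t₀)) (Set.Ici t₀)) (Set.Ici t₀) t
          + a₂ • derivWithin (derivWithin w (Set.Ici t₀)) (Set.Ici t₀) t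
          + a₁ • derivWithin w (Set.Ici t₀) t + a₀ • Ψ (w t) = 0) w' →
      Set.EqOn w w' (Set.Ici t₀)) := by
  have hΨlip : ∃ K, LipschitzWith K Ψ := by
    obtain rfl : Ψ = fun u => F u - P (F u - γ • g u) := funext hΨ
    have hFlip : LipschitzWith ⟨η, hη⟩ F := lipschitzWith_iff_norm_sub_le.2 hF
    have hglip : LipschitzWith ⟨β, hβ⟩ g := lipschitzWith_iff_norm_sub_le.2 hg
    exact ⟨_, hFlip.sub ((lipschitzWith_one_of_variationalInequality hP).comp
      (hFlip.sub ((lipschitzWith_smul γ).comp hglip)))⟩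
  obtain ⟨K, hK⟩ := hΨlip
  obtain ⟨L, hL⟩ := hK.companionField a₀ a₁ a₂
  refine ⟨?_, ?_⟩
  · obtain ⟨X, hX₀, hX⟩ := hL.exists_isTrajectoryOn_Ici t₀ (v₀, v₁, v₂)
    obtain ⟨hw, hDw, hD₂w, hode⟩ := hX.solves_of_companionField (uniqueDiffOn_Ici t₀) hK.continuous
    refine ⟨fun t => (X t).1, hw, ?_, ?_, ?_, hode⟩
    · simp [hX₀]
    · simp [hDw self_mem_Ici, hX₀]
    · simp [hD₂w self_mem_Ici, hX₀]
  · rintro w w' ⟨hw, hw₀, hw₁, hw₂, hode⟩ ⟨hw', hw'₀, hw'₁, hw'₂, hode'⟩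
    have hjet := (isTrajectoryOn_companionField_jet (uniqueDiffOn_Ici t₀) hw hode).eqOn_Ici hL
      (isTrajectoryOn_companionField_jet (uniqueDiffOn_Ici t₀) hw' hode')
      (by simp only [hw₀, hw₁, hw₂, hw'₀, hw'₁, hw'₂])
    exact fun t ht => congrArg Prod.fst (hjet ht)

theorem stmt_5
    {H : Type*} [NormedAddCommGroup H] [InnerProductSpace ℝ H] [CompleteSpace H]
    (Ω : Set H) (hΩne : Ω.Nonempty) (hΩcl : IsClosed Ω) (hΩcv : Convex ℝ Ω)
    (γ : ℝ) (hγ : 0 < γ)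
    (h : H → ℝ) (hconv : ConvexOn ℝ Ω h) (hlsc : LowerSemicontinuousOn h Ω)
    (P : H → H)
    (hP : ∀ u : H, P u ∈ Ω ∧ ∀ v ∈ Ω, ⟪P u - u, v - P u⟫ + γ * h v - γ * h (P u) ≥ 0)
    (F g : H → H) (η β : ℝ) (hη : 0 ≤ η) (hβ : 0 ≤ β)
    (hF : ∀ u v : H, ‖F u - F v‖ ≤ η * ‖u - v‖)
    (hg : ∀ u v : H, ‖g u - g v‖ ≤ β * ‖u - v‖)
    (Ψ : H → H) (hΨ : ∀ u : H, Ψ u = F u - P (F u - γ • g u))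
    (a₀ a₁ a₂ : ℝ) (ha₀ : 0 < a₀) (ha₁ : 0 < a₁) (ha₂ : 0 < a₂)
    (t₀ : ℝ) (v₀ v₁ v₂ : H) :
    (∃ w : ℝ → H, (fun (w : ℝ → H) =>
      ContDiffOn ℝ 3 w (Set.Ici t₀) ∧
      w t₀ = v₀ ∧ derivWithin w (Set.Ici t₀) t₀ = v₁ ∧
      derivWithin (derivWithin w (Set.Ici t₀)) (Set.Ici t₀) t₀ = v₂ ∧
      ∀ t ∈ Set.Ici t₀,
        derivWithin (derivWithin (derivWithin w (Set.Ici t₀)) (Set.Ici t₀)) (Set.Ici t₀) t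
          + a₂ • derivWithin (derivWithin w (Set.Ici t₀)) (Set.Ici t₀) t
          + a₁ • derivWithin w (Set.Ici t₀) t + a₀ • Ψ (w t) = 0) w) ∧
    (∀ w w' : ℝ → H, (fun (w : ℝ → H) =>
      ContDiffOn ℝ 3 w (Set.Ici t₀) ∧
      w t₀ = v₀ ∧ derivWithin w (Set.Ici t₀) t₀ = v₁ ∧
      derivWithin (derivWithin w (Set.Ici t₀)) (Set.Ici t₀) t₀ = v₂ ∧
      ∀ t ∈ Set.Ici t₀,
        derivWithin (derivWithin (derivWithin w (Set.Ici t₀)) (Set.Ici t₀)) (Set.Ici t₀) t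
          + a₂ • derivWithin (derivWithin w (Set.Ici t₀)) (Set.Ici t₀) t
          + a₁ • derivWithin w (Set.Ici t₀) t + a₀ • Ψ (w t) = 0) w → (fun (w : ℝ → H) =>
      ContDiffOn ℝ 3 w (Set.Ici t₀) ∧
      w t₀ = v₀ ∧ derivWithin w (Set.Ici t₀) t₀ = v₁ ∧
      derivWithin (derivWithin w (Set.Ici t₀)) (Set.Ici t₀) t₀ = v₂ ∧
      ∀ t ∈ Set.Ici t₀,
        derivWithin (derivWithin (derivWithin w (Set.Ici t₀)) (Set.Ici t₀)) (Set.Ici t₀) t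
          + a₂ • derivWithin (derivWithin w (Set.Ici t₀)) (Set.Ici t₀) t
          + a₁ • derivWithin w (Set.Ici t₀) t + a₀ • Ψ (w t) = 0) w' →
      Set.EqOn w w' (Set.Ici t₀)) :=
  stmt_5_general Ω γ h P hP F g η β hη hβ hF hg Ψ hΨ a₀ a₁ a₂ t₀ v₀ v₁ v₂
end

section
/- Let H be a real Hilbert space, a₁, a₂ ∈ ℝ, and w : ℕ → H. Define the forward difference w^Δ(k) := w(k+1) − w(k) and iterates w^{Δ^{p+1}} := (w^{Δ^p})^Δ, and set y_p(k) := ‖w^{Δ^p}(k)‖². Then for every k ∈ ℕ: ‖w^{Δ³}(k) + a₂w^{Δ²}(k) + a₁w^Δ(k)‖² = a₁ y₁^{Δ²}(k) + a₂a₁ y₁^Δ(k) + a₁² y₁(k) + (a₂ − 2a₁) y₂^Δ(k) + (a₂² − 2a₁ − a₂a₁) y₂(k) + (1 − a₂ + a₁) y₃(k). -/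
/-- Forward difference operator on sequences. -/
def fdiff {G : Type*} [AddGroup G] (z : ℕ → G) : ℕ → G :=
  fun k => z (k + 1) - z k

/-!
Write `u = w^Δ`, `v = w^{Δ²}`, `x = w^{Δ³}`. Expanding the left-hand side produces the squared
norms `‖u‖², ‖v‖², ‖x‖²` and the cross terms `⟪u, v⟫, ⟪u, x⟫, ⟪v, x⟫`. The discrete product
rule `Δ⟪f, g⟫ = ⟪Δf, g⟫ + ⟪f, Δg⟫ + ⟪Δf, Δg⟫` expresses `y₁^Δ`, `y₂^Δ` and `y₁^{Δ²}` through the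
same quantities, and the three resulting equations can be solved for the cross terms.
-/

open scoped InnerProductSpace

section InnerProductSpace

variable {H : Type*} [NormedAddCommGroup H] [InnerProductSpace ℝ H]

theorem fdiff_inner (f g : ℕ → H) (k : ℕ) :
    fdiff (fun j => ⟪f j, g j⟫_ℝ) k =
      ⟪fdiff f k, g k⟫_ℝ + ⟪f k, fdiff g k⟫_ℝ + ⟪fdiff f k, fdiff g k⟫_ℝ := by
  simp only [fdiff, inner_sub_left, inner_sub_right]
  ring

theorem fdiff_norm_sq (z : ℕ → H) (k : ℕ) :
    fdiff (fun j => ‖z j‖ ^ 2) k = 2 * ⟪z k, fdiff z k⟫_ℝ + ‖fdiff z k‖ ^ 2 := by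
  simp only [← real_inner_self_eq_norm_sq, fdiff_inner, real_inner_comm (fdiff z k) (z k)]
  ring

theorem fdiff_fdiff_norm_sq (z : ℕ → H) (k : ℕ) :
    fdiff (fdiff (fun j => ‖z j‖ ^ 2)) k =
      2 * ⟪z k, fdiff (fdiff z) k⟫_ℝ + 2 * ‖fdiff z k‖ ^ 2
        + 4 * ⟪fdiff z k, fdiff (fdiff z) k⟫_ℝ + ‖fdiff (fdiff z) k‖ ^ 2 := by
  have hΔ : fdiff (fun j => ‖z j‖ ^ 2) =
      fun j => 2 * ⟪z j, fdiff z j⟫_ℝ + ‖fdiff z j‖ ^ 2 :=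
    funext (fdiff_norm_sq z)
  have hlin : fdiff (fun j => 2 * ⟪z j, fdiff z j⟫_ℝ + ‖fdiff z j‖ ^ 2) k =
      2 * fdiff (fun j => ⟪z j, fdiff z j⟫_ℝ) k + fdiff (fun j => ‖fdiff z j‖ ^ 2) k := by
    simp only [fdiff]
    ring
  rw [hΔ, hlin, fdiff_inner, fdiff_norm_sq, ← real_inner_self_eq_norm_sq (fdiff z k)]
  ring

end InnerProductSpace

theorem stmt_17 {H : Type*} [NormedAddCommGroup H] [InnerProductSpace ℝ H]
    (a₁ a₂ : ℝ) (w : ℕ → H) :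
    ∀ k : ℕ,
      ‖fdiff (fdiff (fdiff w)) k + a₂ • fdiff (fdiff w) k + a₁ • fdiff w k‖ ^ 2 =
        a₁ * fdiff (fdiff (fun j => ‖fdiff w j‖ ^ 2)) k
        + a₂ * a₁ * fdiff (fun j => ‖fdiff w j‖ ^ 2) k
        + a₁ ^ 2 * ‖fdiff w k‖ ^ 2
        + (a₂ - 2 * a₁) * fdiff (fun j => ‖fdiff (fdiff w) j‖ ^ 2) k
        + (a₂ ^ 2 - 2 * a₁ - a₂ * a₁) * ‖fdiff (fdiff w) k‖ ^ 2
        + (1 - a₂ + a₁) * ‖fdiff (fdiff (fdiff w)) k‖ ^ 2 := by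
  intro k
  rw [fdiff_fdiff_norm_sq, fdiff_norm_sq (fdiff w), fdiff_norm_sq (fdiff (fdiff w))]
  set u := fdiff w k
  set v := fdiff (fdiff w) k
  set x := fdiff (fdiff (fdiff w)) k
  simp only [← real_inner_self_eq_norm_sq, inner_add_left, inner_add_right,
    real_inner_smul_left, real_inner_smul_right, real_inner_comm u v, real_inner_comm u x,
    real_inner_comm v x]
  ring
end
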